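/- Let A = (a_{ij}) be an invertible d×d integer matrix. Then the map sending p = (p₁, …, p_d) ∈ ℚ^d to (e^{2πip₁}, …, e^{2πip_d}) ∈ (ℂ^×)^d induces a group isomorphism from {p ∈ ℚ^d/ℤ^d : Ap ∈ ℤ^d} onto the group Aut(W) = {γ ∈ (ℂ^×)^d : ∏_{j=1}^d γ_j^{a_{ij}} = 1 for all i}; in particular every component of every element of Aut(W) is a root of unity, and Aut(W) is generated by the images of the d columns of A^{−1}. -/

import Mathlib

open scoped BigOperators

/-- The group `Aut(W)` of diagonal symmetries of the potential
`W = Σ_i Π_j x_j^{a_{ij}}`: all `γ ∈ (ℂ^×)^d` with `Π_j γ_j^{a_{ij}} = 1` for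
every `i`. -/
def AutW {d : ℕ} (A : Matrix (Fin d) (Fin d) ℤ) : Subgroup (Fin d → ℂˣ) where
  carrier := {γ | ∀ i, ∏ j, (γ j) ^ (A i j) = 1}
  one_mem' := by intro i; simp
  mul_mem' := by
    intro a b ha hb i
    have h : ∀ j, ((a * b) j) ^ (A i j) = (a j) ^ (A i j) * (b j) ^ (A i j) := by
      intro j; rw [Pi.mul_apply, mul_zpow]
    simp only [h, Finset.prod_mul_distrib, ha i, hb i, one_mul]
  inv_mem' := by
    intro a ha i
    have h : ∀ j, (a⁻¹ j) ^ (A i j) = ((a j) ^ (A i j))⁻¹ := by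
      intro j; rw [Pi.inv_apply, inv_zpow]
    rw [Finset.prod_congr rfl (fun j _ => h j), Finset.prod_inv_distrib]
    rw [show (∏ j, (a j) ^ (A i j)) = 1 from ha i, inv_one]

/-- `p ↦ e^{2πip}` as a nonzero complex number. -/
noncomputable def expUnit (p : ℚ) : ℂˣ :=
  Units.mk0 (Complex.exp (2 * Real.pi * Complex.I * (p : ℂ))) (Complex.exp_ne_zero _)

/-- `(p₁, …, p_d) ↦ (e^{2πip₁}, …, e^{2πip_d})`. -/
noncomputable def expMap {d : ℕ} (p : Fin d → ℚ) : Fin d → ℂˣ :=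
  fun j => expUnit (p j)

/-! Every `γ ∈ (ℂˣ)^d` lifts to `z ∈ ℂ^d` with `γ_j = e^{2πi z_j}`, and `γ ∈ Aut(W)` says exactly
that `Az = m` for some `m ∈ ℤ^d`. As `A` is invertible, `z = A⁻¹m` is rational, so `γ` is the
product of the images of the columns of `A⁻¹` raised to the powers `m_i`. The components
`e^{2πi q}` with `q` rational are roots of unity of order dividing the denominator of `q`. -/

open Complex Matrix

noncomputable def cexpUnit (z : ℂ) : ℂˣ :=
  Units.mk0 (exp (2 * Real.pi * I * z)) (exp_ne_zero _)

lemma expUnit_eq_cexpUnit (q : ℚ) : expUnit q = cexpUnit q := rfl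

lemma cexpUnit_add (z w : ℂ) : cexpUnit (z + w) = cexpUnit z * cexpUnit w := by
  ext
  simp only [cexpUnit, Units.val_mul, Units.val_mk0, ← exp_add, mul_add]

lemma cexpUnit_intCast_mul (n : ℤ) (z : ℂ) : cexpUnit (n * z) = cexpUnit z ^ n := by
  ext
  simp only [cexpUnit, Units.val_zpow_eq_zpow_val, Units.val_mk0, ← exp_int_mul]
  ring_nf

lemma cexpUnit_sum {ι : Type*} (s : Finset ι) (f : ι → ℂ) :
    cexpUnit (∑ i ∈ s, f i) = ∏ i ∈ s, cexpUnit (f i) := by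
  ext
  simp [cexpUnit, Finset.mul_sum, exp_sum]

lemma cexpUnit_eq_one_iff (z : ℂ) : cexpUnit z = 1 ↔ ∃ n : ℤ, z = n := by
  simp only [cexpUnit, Units.ext_iff, Units.val_mk0, Units.val_one, exp_eq_one_iff]
  refine exists_congr fun n => ?_
  rw [mul_comm (n : ℂ), mul_right_inj' two_pi_I_ne_zero]

lemma cexpUnit_surjective : Function.Surjective cexpUnit := by
  intro u
  refine ⟨log u / (2 * Real.pi * I), ?_⟩
  ext
  simp [cexpUnit, mul_div_cancel₀ _ two_pi_I_ne_zero, exp_log]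

lemma expUnit_eq_one_iff (q : ℚ) : expUnit q = 1 ↔ ∃ n : ℤ, q = n := by
  rw [expUnit_eq_cexpUnit, cexpUnit_eq_one_iff]
  exact exists_congr fun n => by norm_cast

lemma expUnit_pow_den (q : ℚ) : expUnit q ^ q.den = 1 := by
  rw [← zpow_natCast, expUnit_eq_cexpUnit, ← cexpUnit_intCast_mul, cexpUnit_eq_one_iff]
  exact ⟨q.num, by push_cast; exact_mod_cast q.den_mul_eq_num⟩

lemma expMap_add {d : ℕ} (p p' : Fin d → ℚ) : expMap (p + p') = expMap p * expMap p' :=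
  funext fun j => by simp only [expMap, Pi.add_apply, Pi.mul_apply, expUnit_eq_cexpUnit,
    Rat.cast_add, cexpUnit_add]

lemma expMap_eq_one_iff {d : ℕ} (p : Fin d → ℚ) : expMap p = 1 ↔ ∀ j, ∃ m : ℤ, p j = m := by
  simp only [funext_iff, expMap, Pi.one_apply, expUnit_eq_one_iff]

lemma prod_cexpUnit_zpow {ι : Type*} [Fintype ι] (a : ι → ℤ) (z : ι → ℂ) :
    ∏ j, cexpUnit (z j) ^ a j = cexpUnit (∑ j, (a j : ℂ) * z j) := by
  simp only [cexpUnit_sum, cexpUnit_intCast_mul]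

lemma cexpUnit_mem_AutW_iff {d : ℕ} (A : Matrix (Fin d) (Fin d) ℤ) (z : Fin d → ℂ) :
    (fun j => cexpUnit (z j)) ∈ AutW A ↔ ∀ i, ∃ m : ℤ, ∑ j, (A i j : ℂ) * z j = m := by
  refine forall_congr' fun i => ?_
  rw [prod_cexpUnit_zpow, cexpUnit_eq_one_iff]

lemma expMap_mem_AutW_iff {d : ℕ} (A : Matrix (Fin d) (Fin d) ℤ) (p : Fin d → ℚ) :
    expMap p ∈ AutW A ↔ ∀ i, ∃ m : ℤ, ∑ j, (A i j : ℚ) * p j = m := by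
  refine (cexpUnit_mem_AutW_iff A fun j => p j).trans (forall_congr' fun i => ?_)
  exact exists_congr fun m => by norm_cast

lemma expMap_mulVec_intCast {d : ℕ} (B : Matrix (Fin d) (Fin d) ℚ) (m : Fin d → ℤ) :
    expMap (B *ᵥ fun i => (m i : ℚ)) = ∏ i, expMap (fun j => B j i) ^ m i := by
  funext j
  simp only [expMap, Finset.prod_apply, Pi.pow_apply, mulVec, dotProduct, expUnit_eq_cexpUnit,
    Rat.cast_sum, Rat.cast_mul, Rat.cast_intCast, cexpUnit_sum, mul_comm _ ((m _ : ℤ) : ℂ),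
    cexpUnit_intCast_mul]

lemma ratCast_inv_mulVec_eq {n : Type*} [Fintype n] [DecidableEq n] {A : Matrix n n ℤ}
    (hA : (A.map (fun a => (a : ℚ))).det ≠ 0) {z : n → ℂ} {m : n → ℤ}
    (hz : ∀ i, ∑ j, (A i j : ℂ) * z j = m i) :
    (fun j => (((A.map (fun a => (a : ℚ)))⁻¹ *ᵥ fun i => (m i : ℚ)) j : ℂ)) = z := by
  have hdet : IsUnit (A.map (fun a => (a : ℂ))).det := by
    rw [← Int.cast_det, isUnit_iff_ne_zero, Int.cast_ne_zero]
    rw [← Int.cast_det, Int.cast_ne_zero] at hA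
    exact hA
  set B := A.map (fun a => (a : ℚ))
  have hBC : B.map (Rat.castHom ℂ) = A.map (fun a => (a : ℂ)) := by
    ext; simp [B]
  refine mulVec_injective_of_isUnit ((isUnit_iff_isUnit_det _).2 hdet) (funext fun i => ?_)
  have hBp : B *ᵥ (B⁻¹ *ᵥ fun i => (m i : ℚ)) = fun i => (m i : ℚ) := by
    rw [mulVec_mulVec, mul_nonsing_inv _ (isUnit_iff_ne_zero.2 hA), one_mulVec]
  calc (A.map (fun a => (a : ℂ)) *ᵥ _) i
      = Rat.castHom ℂ ((B *ᵥ (B⁻¹ *ᵥ fun i => (m i : ℚ))) i) := by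
        rw [RingHom.map_mulVec, hBC]; rfl
    _ = (m i : ℂ) := by simp [hBp]
    _ = (A.map (fun a => (a : ℂ)) *ᵥ z) i := (hz i).symm

lemma exists_expMap_inv_mulVec_eq {d : ℕ} {A : Matrix (Fin d) (Fin d) ℤ}
    (hA : (A.map (fun a => (a : ℚ))).det ≠ 0) {γ : Fin d → ℂˣ} (hγ : γ ∈ AutW A) :
    ∃ m : Fin d → ℤ, expMap ((A.map (fun a => (a : ℚ)))⁻¹ *ᵥ fun i => (m i : ℚ)) = γ := by
  obtain ⟨z, rfl⟩ := cexpUnit_surjective.comp_left γ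
  choose m hm using (cexpUnit_mem_AutW_iff A z).1 hγ
  refine ⟨m, ?_⟩
  rw [← ratCast_inv_mulVec_eq hA hm]
  rfl

lemma expMap_inv_col_mem_AutW {d : ℕ} {A : Matrix (Fin d) (Fin d) ℤ}
    (hA : (A.map (fun a => (a : ℚ))).det ≠ 0) (i : Fin d) :
    expMap (fun j => (A.map (fun a => (a : ℚ)))⁻¹ j i) ∈ AutW A := by
  refine (expMap_mem_AutW_iff A _).2 fun k => ⟨(1 : Matrix (Fin d) (Fin d) ℤ) k i, ?_⟩
  have h := congrFun₂ (mul_nonsing_inv _ (isUnit_iff_ne_zero.2 hA)) k i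
  rw [mul_apply] at h
  simpa [one_apply] using h

lemma closure_range_expMap_inv_col_eq_AutW {d : ℕ} {A : Matrix (Fin d) (Fin d) ℤ}
    (hA : (A.map (fun a => (a : ℚ))).det ≠ 0) :
    Subgroup.closure (Set.range fun i => expMap fun j => (A.map (fun a => (a : ℚ)))⁻¹ j i) =
      AutW A := by
  refine le_antisymm ((Subgroup.closure_le _).2 (Set.range_subset_iff.2
    (expMap_inv_col_mem_AutW hA))) fun γ hγ => ?_
  obtain ⟨m, rfl⟩ := exists_expMap_inv_mulVec_eq hA hγ
  rw [expMap_mulVec_intCast]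
  exact Subgroup.prod_mem _ fun i _ =>
    Subgroup.zpow_mem _ (Subgroup.subset_closure (Set.mem_range_self i)) _

/-- the map `p ↦ (e^{2πip_j})_j` induces a group isomorphism from
`{p ∈ ℚ^d/ℤ^d : Ap ∈ ℤ^d}` onto `Aut(W)`: it is a homomorphism mapping
`{p : Ap ∈ ℤ^d}` into `Aut(W)`, its kernel is exactly `ℤ^d`, and it is
surjective onto `Aut(W)`.  In particular every component of every element of
`Aut(W)` is a root of unity, and `Aut(W)` is generated by the images of the `d`
columns of `A⁻¹`. -/
theorem expMap_induces_iso_AutW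
    (d : ℕ) (A : Matrix (Fin d) (Fin d) ℤ)
    (hA : (A.map (fun a => (a : ℚ))).det ≠ 0) :
    (∀ p : Fin d → ℚ, (∀ i, ∃ m : ℤ, ∑ j, (A i j : ℚ) * p j = (m : ℚ)) →
      expMap p ∈ AutW A) ∧
    (∀ p p' : Fin d → ℚ, expMap (p + p') = expMap p * expMap p') ∧
    (∀ p : Fin d → ℚ, (∀ i, ∃ m : ℤ, ∑ j, (A i j : ℚ) * p j = (m : ℚ)) →
      (expMap p = 1 ↔ ∀ j, ∃ m : ℤ, p j = (m : ℚ))) ∧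
    (∀ γ ∈ AutW A, ∃ p : Fin d → ℚ,
      (∀ i, ∃ m : ℤ, ∑ j, (A i j : ℚ) * p j = (m : ℚ)) ∧ expMap p = γ) ∧
    (∀ γ ∈ AutW A, ∀ j, ∃ n : ℕ, 0 < n ∧ (γ j) ^ n = 1) ∧
    Subgroup.closure
      (Set.range (fun i : Fin d =>
        expMap (fun j => ((A.map (fun a => (a : ℚ)))⁻¹) j i))) = AutW A := by
  have surj : ∀ γ ∈ AutW A, ∃ p, expMap p = γ := fun γ hγ =>
    let ⟨_, hm⟩ := exists_expMap_inv_mulVec_eq hA hγ; ⟨_, hm⟩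
  refine ⟨fun p => (expMap_mem_AutW_iff A p).2, expMap_add, fun p _ => expMap_eq_one_iff p,
    fun γ hγ => ?_, fun γ hγ j => ?_, closure_range_expMap_inv_col_eq_AutW hA⟩
  · obtain ⟨p, rfl⟩ := surj γ hγ
    exact ⟨p, (expMap_mem_AutW_iff A p).1 hγ, rfl⟩
  · obtain ⟨p, rfl⟩ := surj γ hγ
    exact ⟨(p j).den, (p j).den_pos, expUnit_pow_den (p j)⟩
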